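/- arXiv:2402.07099 — 2 statements merged into one kernel-verified Lean document; each statement's English description precedes it below -/
import Mathlib

section
/- Let G be a MILP instance of size (m,n) with SB(G) ∈ ℝ^n, and let j_1, j_2 ∈ {1,…,n}. If for every l ≥ 0 the multiset equality {{C_l^{WW}(j,j_1) : 1≤j≤n}} = {{C_l^{WW}(j,j_2) : 1≤j≤n}} holds, then SB(G)_{j_1} = SB(G)_{j_2}. -/
set_option maxHeartbeats 1000000


open scoped BigOperators Classical
open MeasureTheory

noncomputable section

/-- Type of constraint senses: `0` is `≤`, `1` is `=`, `2` is `≥`. -/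
abbrev Sense : Type := Fin 3

/-- Extended lower bounds: `Sum.inl a` is a real bound, `Sum.inr ()` is `-∞`. -/
abbrev ExtLo : Type := ℝ ⊕ Unit

/-- Extended upper bounds: `Sum.inl a` is a real bound, `Sum.inr ()` is `+∞`. -/
abbrev ExtHi : Type := ℝ ⊕ Unit

def senseRel (s : Sense) (a b : ℝ) : Prop :=
  if s = 0 then a ≤ b else if s = 1 then a = b else b ≤ a

def loSat (lo : ExtLo) (x : ℝ) : Prop :=
  match lo with
  | Sum.inl a => a ≤ x
  | Sum.inr _ => True

def hiSat (hi : ExtHi) (x : ℝ) : Prop :=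
  match hi with
  | Sum.inl a => x ≤ a
  | Sum.inr _ => True

/-- The space `𝒢_{m,n}` of MILP instances of size `(m,n)`:
`(A, b, c, ∘, l, u, I)`, with `I` encoded as a Boolean indicator vector. -/
abbrev MILP (m n : ℕ) : Type :=
  (Fin m → Fin n → ℝ) × (Fin m → ℝ) × (Fin n → ℝ) × (Fin m → Sense) ×
  (Fin n → ExtLo) × (Fin n → ExtHi) × (Fin n → Bool)

namespace MILP

variable {m n : ℕ}

def A (G : MILP m n) : Fin m → Fin n → ℝ := G.1
def b (G : MILP m n) : Fin m → ℝ := G.2.1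
def c (G : MILP m n) : Fin n → ℝ := G.2.2.1
def sense (G : MILP m n) : Fin m → Sense := G.2.2.2.1
def lo (G : MILP m n) : Fin n → ExtLo := G.2.2.2.2.1
def hi (G : MILP m n) : Fin n → ExtHi := G.2.2.2.2.2.1
def isInt (G : MILP m n) : Fin n → Bool := G.2.2.2.2.2.2

end MILP

/-- Satisfaction of the linear constraints `(Ax) ∘ b`. -/
def consSat {m n : ℕ} (G : MILP m n) (x : Fin n → ℝ) : Prop :=
  ∀ i, senseRel (MILP.sense G i) (∑ j, MILP.A G i j * x j) (MILP.b G i)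

/-- Feasible set of the LP relaxation of `G`. -/
def lpFeasSet {m n : ℕ} (G : MILP m n) : Set (Fin n → ℝ) :=
  {x | consSat G x ∧ ∀ j, loSat (MILP.lo G j) (x j) ∧ hiSat (MILP.hi G j) (x j)}

/-- Feasible set of `LP(G, j, lo', hi')`: the LP relaxation of `G` with the bound
constraint on variable `j` replaced by `lo' ≤ x_j ≤ hi'`. -/
def feasSetMod {m n : ℕ} (G : MILP m n) (j : Fin n) (lo' : ExtLo) (hi' : ExtHi) :
    Set (Fin n → ℝ) :=
  {x | consSat G x ∧ (∀ j', j' ≠ j → loSat (MILP.lo G j') (x j') ∧ hiSat (MILP.hi G j') (x j'))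
      ∧ loSat lo' (x j) ∧ hiSat hi' (x j)}

/-- Optimal value (in `ℝ ∪ {±∞}`) of the LP `min cᵀx` over `S`:
`+∞` if infeasible, `-∞` if unbounded below. -/
def lpVal {n : ℕ} (c : Fin n → ℝ) (S : Set (Fin n → ℝ)) : EReal :=
  ⨅ x ∈ S, ((∑ j, c j * x j : ℝ) : EReal)

/-- `f*(G)`: optimal value of the LP relaxation of `G`. -/
def fstar {m n : ℕ} (G : MILP m n) : EReal := lpVal (MILP.c G) (lpFeasSet G)

/-- `f*(G, j, lo', hi')`: optimal value of `LP(G, j, lo', hi')`. -/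
def lpValMod {m n : ℕ} (G : MILP m n) (j : Fin n) (lo' : ExtLo) (hi' : ExtHi) : EReal :=
  lpVal (MILP.c G) (feasSetMod G j lo' hi')

/-- The Euclidean norm on `ℝⁿ` (as `Fin n → ℝ`). -/
def euclNorm {n : ℕ} (x : Fin n → ℝ) : ℝ := Real.sqrt (∑ j, x j ^ 2)

/-- The Euclidean distance on `ℝⁿ`. -/
def euclDist {n : ℕ} (x y : Fin n → ℝ) : ℝ := euclNorm (fun j => x j - y j)

/-- `x` is an optimal solution of the LP relaxation of `G`. -/
def IsOptSol {m n : ℕ} (G : MILP m n) (x : Fin n → ℝ) : Prop :=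
  x ∈ lpFeasSet G ∧ ((∑ j, MILP.c G j * x j : ℝ) : EReal) = fstar G

/-- `x` is an optimal solution of smallest Euclidean norm of the LP relaxation of `G`. -/
def IsMinNormOpt {m n : ℕ} (G : MILP m n) (x : Fin n → ℝ) : Prop :=
  IsOptSol G x ∧ ∀ y, IsOptSol G y → euclNorm x ≤ euclNorm y

/-- `x*(G)`: the optimal solution of smallest Euclidean norm of the LP relaxation
(defaults to `0` when it does not exist). -/
def xstar {m n : ℕ} (G : MILP m n) : Fin n → ℝ :=
  if h : ∃ x, IsMinNormOpt G x then h.choose else 0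

/-- `f*(G, j, l_j, ⌊x*(G)_j⌋)`. -/
def branchDown {m n : ℕ} (G : MILP m n) (j : Fin n) : EReal :=
  lpValMod G j (MILP.lo G j) (Sum.inl ((⌊xstar G j⌋ : ℤ) : ℝ))

/-- `f*(G, j, ⌈x*(G)_j⌉, u_j)`. -/
def branchUp {m n : ℕ} (G : MILP m n) (j : Fin n) : EReal :=
  lpValMod G j (Sum.inl ((⌈xstar G j⌉ : ℤ) : ℝ)) (MILP.hi G j)

/-- The strong branching score vector `SB(G) ∈ ℝⁿ`. -/
def SB {m n : ℕ} (G : MILP m n) : Fin n → ℝ := fun j =>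
  if MILP.isInt G j then
    ((branchDown G j).toReal - (fstar G).toReal) * ((branchUp G j).toReal - (fstar G).toReal)
  else 0

/-- `SB(G) ∈ ℝⁿ`: the LP relaxation of `G` is feasible and bounded (so that the
min-norm optimal solution `x*(G)` exists and `f*(G)` is finite), and all the
branch LP values entering the strong branching scores are finite. -/
def SBRealValued {m n : ℕ} (G : MILP m n) : Prop :=
  (∃ x, IsMinNormOpt G x) ∧ fstar G ≠ ⊤ ∧ fstar G ≠ ⊥ ∧
  ∀ j, MILP.isInt G j →
    branchDown G j ≠ ⊤ ∧ branchDown G j ≠ ⊥ ∧ branchUp G j ≠ ⊤ ∧ branchUp G j ≠ ⊥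

/-! ### WL colors -/

abbrev VFeat : Type := ℝ × Sense
abbrev WFeat : Type := ℝ × ExtLo × ExtHi × Bool

/-- The pair (type of constraint-node colors, type of variable-node colors) at
each round of the WL test. -/
def WLTypes : ℕ → Type × Type
  | 0 => (VFeat, WFeat)
  | l + 1 =>
      ((WLTypes l).1 × Multiset ((WLTypes l).2 × ℝ),
       (WLTypes l).2 × Multiset ((WLTypes l).1 × ℝ))

abbrev VColor (l : ℕ) : Type := (WLTypes l).1
abbrev WColor (l : ℕ) : Type := (WLTypes l).2

/-- The canonical WL colors of a MILP instance: `(wl G l).1 i = C_l^V(i)` and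
`(wl G l).2 j = C_l^W(j)`. -/
def wl {m n : ℕ} (G : MILP m n) : (l : ℕ) → (Fin m → VColor l) × (Fin n → WColor l)
  | 0 =>
      (fun i => (MILP.b G i, MILP.sense G i),
       fun j => (MILP.c G j, MILP.lo G j, MILP.hi G j, MILP.isInt G j))
  | l + 1 =>
      (fun i => ((wl G l).1 i,
        (Finset.univ.filter (fun j => MILP.A G i j ≠ 0)).val.map
          (fun j => ((wl G l).2 j, MILP.A G i j))),
       fun j => ((wl G l).2 j,
        (Finset.univ.filter (fun i => MILP.A G i j ≠ 0)).val.map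
          (fun i => ((wl G l).1 i, MILP.A G i j))))

/-- `G` is message-passing-tractable: whenever two constraints and two variables are
respectively indistinguishable by all rounds of the WL test, the corresponding matrix
entries agree (i.e. every submatrix of `A` over a pair of classes of the stable WL
partition is constant). -/
def MPTractable {m n : ℕ} (G : MILP m n) : Prop :=
  ∀ i i' j j', (∀ l, (wl G l).1 i = (wl G l).1 i') → (∀ l, (wl G l).2 j = (wl G l).2 j') →
    MILP.A G i j = MILP.A G i' j'

/-- `G ∼^W G2`. -/
def WLEquivW {m n : ℕ} (G G2 : MILP m n) : Prop :=
  ∀ l, Finset.univ.val.map ((wl G l).1) = Finset.univ.val.map ((wl G2 l).1)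
    ∧ ∀ j, (wl G l).2 j = (wl G2 l).2 j

/-! ### MP-GNNs -/

/-- A message-passing GNN of size `(m,n)`. -/
structure MPGNN (m n : ℕ) where
  L : ℕ
  d : ℕ → ℕ
  e : ℕ → ℕ
  p0 : ℝ × Sense → (Fin (d 0) → ℝ)
  q0 : ℝ × ExtLo × ExtHi × Bool → (Fin (d 0) → ℝ)
  f : (l : ℕ) → (Fin (d l) → ℝ) × ℝ → (Fin (e l) → ℝ)
  g : (l : ℕ) → (Fin (d l) → ℝ) × ℝ → (Fin (e l) → ℝ)
  p : (l : ℕ) → (Fin (d l) → ℝ) × (Fin (e l) → ℝ) → (Fin (d (l + 1)) → ℝ)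
  q : (l : ℕ) → (Fin (d l) → ℝ) × (Fin (e l) → ℝ) → (Fin (d (l + 1)) → ℝ)
  r : (Fin (d L) → ℝ) × (Fin (d L) → ℝ) × (Fin (d L) → ℝ) → ℝ
  p0_cont : Continuous p0
  q0_cont : Continuous q0
  f_cont : ∀ l, Continuous (f l)
  g_cont : ∀ l, Continuous (g l)
  p_cont : ∀ l, Continuous (p l)
  q_cont : ∀ l, Continuous (q l)
  r_cont : Continuous r
  f_zero : ∀ l t, f l (t, 0) = 0
  g_zero : ∀ l s, g l (s, 0) = 0

namespace MPGNN

variable {m n : ℕ}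

/-- The features of an MP-GNN on input `G` after `l` layers:
`(st N G l).1 i = s_i^l` and `(st N G l).2 j = t_j^l`. -/
def st (N : MPGNN m n) (G : MILP m n) :
    (l : ℕ) → (Fin m → (Fin (N.d l) → ℝ)) × (Fin n → (Fin (N.d l) → ℝ))
  | 0 =>
      (fun i => N.p0 (MILP.b G i, MILP.sense G i),
       fun j => N.q0 (MILP.c G j, MILP.lo G j, MILP.hi G j, MILP.isInt G j))
  | l + 1 =>
      (fun i => N.p l ((st N G l).1 i, ∑ j, N.f l ((st N G l).2 j, MILP.A G i j)),
       fun j => N.q l ((st N G l).2 j, ∑ i, N.g l ((st N G l).1 i, MILP.A G i j)))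

/-- The output `F(G) ∈ ℝⁿ` of an MP-GNN. -/
def eval (N : MPGNN m n) (G : MILP m n) : Fin n → ℝ := fun j =>
  N.r (∑ i, (st N G N.L).1 i, ∑ j', (st N G N.L).2 j', (st N G N.L).2 j)

end MPGNN

/-! ### 2-FWL colors -/

/-- The pair (type of `(V,W)`-pair colors, type of `(W,W)`-pair colors) at each
round of the 2-FWL test. -/
def FWLTypes : ℕ → Type × Type
  | 0 => (VFeat × WFeat × ℝ, WFeat × WFeat × Bool)
  | l + 1 =>
      ((FWLTypes l).1 × Multiset ((FWLTypes l).2 × (FWLTypes l).1),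
       (FWLTypes l).2 × Multiset ((FWLTypes l).1 × (FWLTypes l).1))

abbrev VWColor (l : ℕ) : Type := (FWLTypes l).1
abbrev WWColor (l : ℕ) : Type := (FWLTypes l).2

/-- The canonical 2-FWL colors of a MILP instance: `(fwl G l).1 i j = C_l^{VW}(i,j)` and
`(fwl G l).2 j₁ j₂ = C_l^{WW}(j₁,j₂)`. -/
def fwl {m n : ℕ} (G : MILP m n) :
    (l : ℕ) → (Fin m → Fin n → VWColor l) × (Fin n → Fin n → WWColor l)
  | 0 =>
      (fun i j => ((MILP.b G i, MILP.sense G i),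
        (MILP.c G j, MILP.lo G j, MILP.hi G j, MILP.isInt G j), MILP.A G i j),
       fun j1 j2 => ((MILP.c G j1, MILP.lo G j1, MILP.hi G j1, MILP.isInt G j1),
        (MILP.c G j2, MILP.lo G j2, MILP.hi G j2, MILP.isInt G j2), decide (j1 = j2)))
  | l + 1 =>
      (fun i j => ((fwl G l).1 i j,
        Finset.univ.val.map (fun j1 => ((fwl G l).2 j1 j, (fwl G l).1 i j1))),
       fun j1 j2 => ((fwl G l).2 j1 j2,
        Finset.univ.val.map (fun i => ((fwl G l).1 i j2, (fwl G l).1 i j1))))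

/-- `G ∼₂ G2`. -/
def FWLEquiv {m n : ℕ} (G G2 : MILP m n) : Prop :=
  ∀ l, (Finset.univ : Finset (Fin m × Fin n)).val.map (fun p => (fwl G l).1 p.1 p.2)
        = (Finset.univ : Finset (Fin m × Fin n)).val.map (fun p => (fwl G2 l).1 p.1 p.2)
    ∧ (Finset.univ : Finset (Fin n × Fin n)).val.map (fun p => (fwl G l).2 p.1 p.2)
        = (Finset.univ : Finset (Fin n × Fin n)).val.map (fun p => (fwl G2 l).2 p.1 p.2)

/-- `G ∼₂^W G2`. -/
def FWLEquivW {m n : ℕ} (G G2 : MILP m n) : Prop :=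
  ∀ l, ∀ j, Finset.univ.val.map (fun i => (fwl G l).1 i j)
        = Finset.univ.val.map (fun i => (fwl G2 l).1 i j)
    ∧ Finset.univ.val.map (fun j1 => (fwl G l).2 j1 j)
        = Finset.univ.val.map (fun j1 => (fwl G2 l).2 j1 j)

/-! ### 2-FGNNs -/

/-- A second-order folklore GNN of size `(m,n)`. -/
structure FGNN2 (m n : ℕ) where
  L : ℕ
  d : ℕ → ℕ
  e : ℕ → ℕ
  p0 : VFeat × WFeat × ℝ → (Fin (d 0) → ℝ)
  q0 : WFeat × WFeat × Bool → (Fin (d 0) → ℝ)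
  f : (l : ℕ) → (Fin (d l) → ℝ) × (Fin (d l) → ℝ) → (Fin (e l) → ℝ)
  g : (l : ℕ) → (Fin (d l) → ℝ) × (Fin (d l) → ℝ) → (Fin (e l) → ℝ)
  p : (l : ℕ) → (Fin (d l) → ℝ) × (Fin (e l) → ℝ) → (Fin (d (l + 1)) → ℝ)
  q : (l : ℕ) → (Fin (d l) → ℝ) × (Fin (e l) → ℝ) → (Fin (d (l + 1)) → ℝ)
  r : (Fin (d L) → ℝ) × (Fin (d L) → ℝ) → ℝ
  p0_cont : Continuous p0
  q0_cont : Continuous q0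
  f_cont : ∀ l, Continuous (f l)
  g_cont : ∀ l, Continuous (g l)
  p_cont : ∀ l, Continuous (p l)
  q_cont : ∀ l, Continuous (q l)
  r_cont : Continuous r

namespace FGNN2

variable {m n : ℕ}

/-- The features of a 2-FGNN on input `G` after `l` layers:
`(st N G l).1 i j = s_{ij}^l` and `(st N G l).2 j₁ j₂ = t_{j₁j₂}^l`. -/
def st (N : FGNN2 m n) (G : MILP m n) :
    (l : ℕ) → (Fin m → Fin n → (Fin (N.d l) → ℝ)) × (Fin n → Fin n → (Fin (N.d l) → ℝ))
  | 0 =>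
      (fun i j => N.p0 ((MILP.b G i, MILP.sense G i),
        (MILP.c G j, MILP.lo G j, MILP.hi G j, MILP.isInt G j), MILP.A G i j),
       fun j1 j2 => N.q0 ((MILP.c G j1, MILP.lo G j1, MILP.hi G j1, MILP.isInt G j1),
        (MILP.c G j2, MILP.lo G j2, MILP.hi G j2, MILP.isInt G j2), decide (j1 = j2)))
  | l + 1 =>
      (fun i j => N.p l ((st N G l).1 i j, ∑ j1, N.f l ((st N G l).2 j1 j, (st N G l).1 i j1)),
       fun j1 j2 => N.q l ((st N G l).2 j1 j2, ∑ i, N.g l ((st N G l).1 i j2, (st N G l).1 i j1)))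

/-- The output `F(G) ∈ ℝⁿ` of a 2-FGNN. -/
def eval (N : FGNN2 m n) (G : MILP m n) : Fin n → ℝ := fun j =>
  N.r (∑ i, (st N G N.L).1 i j, ∑ j1, (st N G N.L).2 j1 j)

end FGNN2

namespace SBAux
open Finset

variable {m n : ℕ}

/-- default elements -/
def dVW : (l : ℕ) → VWColor l
  | 0 => ((0, 0), (0, Sum.inl 0, Sum.inl 0, false), 0)
  | l+1 => (dVW l, 0)

def dWW : (l : ℕ) → WWColor l
  | 0 => ((0, Sum.inl 0, Sum.inl 0, false), (0, Sum.inl 0, Sum.inl 0, false), false)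
  | l+1 => (dWW l, 0)

/-- extraction functions -/
def wwFlag : (l : ℕ) → WWColor l → Bool
  | 0, t => t.2.2
  | l+1, t => wwFlag l t.1

def wwFeat : (l : ℕ) → WWColor l → WFeat
  | 0, t => t.1
  | l+1, t => wwFeat l t.1

def vwFeatV : (l : ℕ) → VWColor l → VFeat
  | 0, t => t.1
  | l+1, t => vwFeatV l t.1

def vwA : (l : ℕ) → VWColor l → ℝ
  | 0, t => t.2.2
  | l+1, t => vwA l t.1

lemma fwl1_succ (G : MILP m n) (l : ℕ) (i : Fin m) (j : Fin n) :
    (fwl G (l+1)).1 i j = ((fwl G l).1 i j,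
      Finset.univ.val.map (fun j1 => ((fwl G l).2 j1 j, (fwl G l).1 i j1))) := rfl

lemma fwl2_succ (G : MILP m n) (l : ℕ) (j1 j2 : Fin n) :
    (fwl G (l+1)).2 j1 j2 = ((fwl G l).2 j1 j2,
      Finset.univ.val.map (fun i => ((fwl G l).1 i j2, (fwl G l).1 i j1))) := rfl

lemma wwFlag_fwl (G : MILP m n) (l : ℕ) (j j' : Fin n) :
    wwFlag l ((fwl G l).2 j j') = decide (j = j') := by
  induction l with
  | zero => rfl
  | succ l ih => rw [fwl2_succ]; exact ih

lemma wwFeat_fwl (G : MILP m n) (l : ℕ) (j j' : Fin n) :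
    wwFeat l ((fwl G l).2 j j') = (MILP.c G j, MILP.lo G j, MILP.hi G j, MILP.isInt G j) := by
  induction l with
  | zero => rfl
  | succ l ih => rw [fwl2_succ]; exact ih

lemma vwFeatV_fwl (G : MILP m n) (l : ℕ) (i : Fin m) (j : Fin n) :
    vwFeatV l ((fwl G l).1 i j) = (MILP.b G i, MILP.sense G i) := by
  induction l with
  | zero => rfl
  | succ l ih => rw [fwl1_succ]; exact ih

lemma vwA_fwl (G : MILP m n) (l : ℕ) (i : Fin m) (j : Fin n) :
    vwA l ((fwl G l).1 i j) = MILP.A G i j := by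
  induction l with
  | zero => rfl
  | succ l ih => rw [fwl1_succ]; exact ih

/-- pair colorings as functions on product types -/
def pc1 (G : MILP m n) (l : ℕ) : Fin m × Fin n → VWColor l := fun p => (fwl G l).1 p.1 p.2
def pc2 (G : MILP m n) (l : ℕ) : Fin n × Fin n → WWColor l := fun p => (fwl G l).2 p.1 p.2

lemma pc1_fst (G : MILP m n) (l : ℕ) (p : Fin m × Fin n) :
    (pc1 G (l+1) p).1 = pc1 G l p := rfl
lemma pc2_fst (G : MILP m n) (l : ℕ) (p : Fin n × Fin n) :
    (pc2 G (l+1) p).1 = pc2 G l p := rfl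

def StableAt (G : MILP m n) (L : ℕ) : Prop :=
  (∀ p q : Fin m × Fin n, pc1 G L p = pc1 G L q → pc1 G (L+1) p = pc1 G (L+1) q) ∧
  (∀ p q : Fin n × Fin n, pc2 G L p = pc2 G L q → pc2 G (L+1) p = pc2 G (L+1) q)

/-- Abstract stabilization of a refining sequence of colorings of a finite set. -/
lemma abstract_stable {α : Type*} [Fintype α] {T : ℕ → Type*}
    (f : (l : ℕ) → α → T l) (g : (l : ℕ) → T (l+1) → T l)
    (hdet : ∀ l p, f l p = g l (f (l+1) p)) :
    ∃ L, ∀ p q : α, f L p = f L q → f (L+1) p = f (L+1) q := by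
  classical
  set c : ℕ → ℕ := fun l => (Finset.univ.image (f l)).card with hc
  have him : ∀ l, (Finset.univ.image (f (l+1))).image (g l) = Finset.univ.image (f l) := by
    intro l
    ext t
    constructor
    · intro ht
      rcases Finset.mem_image.1 ht with ⟨u, hu, rfl⟩
      rcases Finset.mem_image.1 hu with ⟨p, -, rfl⟩
      exact Finset.mem_image.2 ⟨p, Finset.mem_univ p, hdet l p⟩
    · intro ht
      rcases Finset.mem_image.1 ht with ⟨p, -, rfl⟩
      exact Finset.mem_image.2 ⟨f (l+1) p,
        Finset.mem_image.2 ⟨p, Finset.mem_univ p, rfl⟩, (hdet l p).symm⟩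
  have hmono : ∀ l, c l ≤ c (l+1) := by
    intro l
    rw [hc]
    simp only
    rw [← him l]
    exact Finset.card_image_le
  have hbnd : ∀ l, c l ≤ Fintype.card α := fun l =>
    Finset.card_image_le.trans (le_of_eq Finset.card_univ)
  have hex : ∃ L, c L = c (L+1) := by
    by_contra hcon
    push_neg at hcon
    have hstrict : StrictMono c := by
      apply strictMono_nat_of_lt_succ
      intro l
      exact lt_of_le_of_ne (hmono l) (hcon l)
    have h4 := hstrict.le_apply (x := Fintype.card α + 1)
    have h5 := hbnd (Fintype.card α + 1)
    omega
  obtain ⟨L, hL⟩ := hex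
  have hcard : ((Finset.univ.image (f (L+1))).image (g L)).card
      = (Finset.univ.image (f (L+1))).card := by
    rw [him L]
    simp only [hc] at hL
    exact hL
  have hinj := Finset.injOn_of_card_image_eq hcard
  refine ⟨L, fun p q hpq => ?_⟩
  have hp : f (L+1) p ∈ Finset.univ.image (f (L+1)) :=
    Finset.mem_image_of_mem _ (Finset.mem_univ p)
  have hq : f (L+1) q ∈ Finset.univ.image (f (L+1)) :=
    Finset.mem_image_of_mem _ (Finset.mem_univ q)
  exact hinj hp hq (by rw [← hdet L p, ← hdet L q]; exact hpq)

lemma exists_stableAt (G : MILP m n) : ∃ L, StableAt G L := by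
  obtain ⟨L, hL⟩ := abstract_stable
    (α := (Fin m × Fin n) ⊕ (Fin n × Fin n))
    (T := fun l => VWColor l ⊕ WWColor l)
    (f := fun l z => z.elim (fun p => Sum.inl (pc1 G l p)) (fun p => Sum.inr (pc2 G l p)))
    (g := fun l => Sum.map (fun t => t.1) (fun t => t.1))
    (by rintro l (p | p) <;> rfl)
  refine ⟨L, ?_, ?_⟩
  · intro p q hpq
    have := hL (Sum.inl p) (Sum.inl q) (by simp only [Sum.elim_inl]; exact congrArg Sum.inl hpq)
    simpa only [Sum.elim_inl, Sum.inl.injEq] using this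
  · intro p q hpq
    have := hL (Sum.inr p) (Sum.inr q) (by simp only [Sum.elim_inr]; exact congrArg Sum.inr hpq)
    simpa only [Sum.elim_inr, Sum.inr.injEq] using this


/-! ### small arithmetic helpers -/

lemma sum_w_le {ι : Type*} (fs : Finset ι) (w t : ι → ℝ) (r : ℝ)
    (hw0 : ∀ i ∈ fs, 0 ≤ w i) (ht : ∀ i ∈ fs, w i ≠ 0 → t i ≤ r) :
    ∑ i ∈ fs, w i * t i ≤ (∑ i ∈ fs, w i) * r := by
  rw [Finset.sum_mul]
  apply Finset.sum_le_sum
  intro i hi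
  rcases eq_or_ne (w i) 0 with h0 | h0
  · rw [h0]; simp
  · exact mul_le_mul_of_nonneg_left (ht i hi h0) (hw0 i hi)

lemma sum_w_ge {ι : Type*} (fs : Finset ι) (w t : ι → ℝ) (r : ℝ)
    (hw0 : ∀ i ∈ fs, 0 ≤ w i) (ht : ∀ i ∈ fs, w i ≠ 0 → r ≤ t i) :
    (∑ i ∈ fs, w i) * r ≤ ∑ i ∈ fs, w i * t i := by
  rw [Finset.sum_mul]
  apply Finset.sum_le_sum
  intro i hi
  rcases eq_or_ne (w i) 0 with h0 | h0
  · rw [h0]; simp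
  · exact mul_le_mul_of_nonneg_left (ht i hi h0) (hw0 i hi)

lemma senseRel_wavg {ι : Type*} (fs : Finset ι) (s : Sense) (b : ℝ) (w t : ι → ℝ)
    (hw0 : ∀ i ∈ fs, 0 ≤ w i) (hw1 : ∑ i ∈ fs, w i = 1)
    (ht : ∀ i ∈ fs, w i ≠ 0 → senseRel s (t i) b) :
    senseRel s (∑ i ∈ fs, w i * t i) b := by
  unfold senseRel at *
  split_ifs with h1 h2
  · have := sum_w_le fs w t b hw0 (fun i hi hne => by
      have := ht i hi hne; rw [if_pos h1] at this; exact this)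
    rw [hw1, one_mul] at this; exact this
  · have hle := sum_w_le fs w t b hw0 (fun i hi hne => by
      have := ht i hi hne; rw [if_neg h1, if_pos h2] at this; exact le_of_eq this)
    have hge := sum_w_ge fs w t b hw0 (fun i hi hne => by
      have := ht i hi hne; rw [if_neg h1, if_pos h2] at this; exact le_of_eq this.symm)
    rw [hw1, one_mul] at hle hge
    exact le_antisymm hle hge
  · have := sum_w_ge fs w t b hw0 (fun i hi hne => by
      have := ht i hi hne; rw [if_neg h1, if_neg h2] at this; exact this)
    rw [hw1, one_mul] at this; exact this

lemma loSat_wavg {ι : Type*} (fs : Finset ι) (lo : ExtLo) (w t : ι → ℝ)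
    (hw0 : ∀ i ∈ fs, 0 ≤ w i) (hw1 : ∑ i ∈ fs, w i = 1)
    (ht : ∀ i ∈ fs, w i ≠ 0 → loSat lo (t i)) :
    loSat lo (∑ i ∈ fs, w i * t i) := by
  match lo with
  | Sum.inr _ => trivial
  | Sum.inl a =>
    have := sum_w_ge fs w t a hw0 (fun i hi hne => ht i hi hne)
    rw [hw1, one_mul] at this
    exact this

lemma hiSat_wavg {ι : Type*} (fs : Finset ι) (hi : ExtHi) (w t : ι → ℝ)
    (hw0 : ∀ i ∈ fs, 0 ≤ w i) (hw1 : ∑ i ∈ fs, w i = 1)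
    (ht : ∀ i ∈ fs, w i ≠ 0 → hiSat hi (t i)) :
    hiSat hi (∑ i ∈ fs, w i * t i) := by
  match hi with
  | Sum.inr _ => trivial
  | Sum.inl a =>
    have := sum_w_le fs w t a hw0 (fun i hi hne => ht i hi hne)
    rw [hw1, one_mul] at this
    exact this

/-- fiber counting from multiset equality -/
lemma filter_card_eq_of_map_eq {ι β : Type*} (s : Finset ι) (f g : ι → β)
    (hfg : s.val.map f = s.val.map g) (k : β) :
    (s.filter (fun i => f i = k)).card = (s.filter (fun i => g i = k)).card := by
  classical
  have hc := congrArg (Multiset.countP (fun t => t = k)) hfg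
  rw [Multiset.countP_map, Multiset.countP_map] at hc
  rw [Finset.card_def, Finset.card_def, Finset.filter_val, Finset.filter_val]
  exact hc

/-- extraction of class-filtered sums of `A`-values from a multiset of color pairs -/
def esum (l : ℕ) {α : Type*} (k : α) (M : Multiset (α × VWColor l)) : ℝ :=
  ((M.filter (fun z => z.1 = k)).map (fun z => vwA l z.2)).sum

lemma esum_map {ι : Type*} (fs : Finset ι) (l : ℕ) {α : Type*} (k : α)
    (c : ι → α) (v : ι → VWColor l) :
    esum l k (fs.val.map (fun i => (c i, v i)))
      = ∑ i ∈ fs.filter (fun i => c i = k), vwA l (v i) := by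
  classical
  unfold esum
  rw [Multiset.filter_map, Multiset.map_map]
  rw [Finset.sum_eq_multiset_sum]
  rw [Finset.filter_val]
  rfl


/-! ### LP-side helpers -/

lemma lpVal_le_of_exists {n : ℕ} (c : Fin n → ℝ) (S1 S2 : Set (Fin n → ℝ))
    (hmap : ∀ x ∈ S1, ∃ y ∈ S2, (∑ j, c j * y j) = ∑ j, c j * x j) :
    lpVal c S2 ≤ lpVal c S1 := by
  unfold lpVal
  apply le_iInf₂
  intro x hx
  obtain ⟨y, hy, he⟩ := hmap x hx
  calc (⨅ y ∈ S2, ((∑ j, c j * y j : ℝ) : EReal)) ≤ ((∑ j, c j * y j : ℝ) : EReal) :=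
        iInf₂_le y hy
  _ = ((∑ j, c j * x j : ℝ) : EReal) := by rw [he]

lemma feasSetMod_self {m n : ℕ} (G : MILP m n) (j : Fin n) :
    feasSetMod G j (MILP.lo G j) (MILP.hi G j) = lpFeasSet G := by
  ext x
  constructor
  · rintro ⟨h1, h2, h3⟩
    refine ⟨h1, fun j' => ?_⟩
    rcases eq_or_ne j' j with rfl | hne
    · exact h3
    · exact h2 j' hne
  · rintro ⟨h1, h2⟩
    exact ⟨h1, fun j' _ => h2 j', h2 j⟩

lemma senseRel_mid (s : Sense) (b u v : ℝ) (hu : senseRel s u b) (hv : senseRel s v b) :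
    senseRel s ((u + v) / 2) b := by
  unfold senseRel at *
  split_ifs at * <;> linarith

lemma loSat_mid (lo : ExtLo) (u v : ℝ) (hu : loSat lo u) (hv : loSat lo v) :
    loSat lo ((u + v) / 2) := by
  match lo with
  | Sum.inr _ => trivial
  | Sum.inl a => simp only [loSat] at *; linarith

lemma hiSat_mid (hi : ExtHi) (u v : ℝ) (hu : hiSat hi u) (hv : hiSat hi v) :
    hiSat hi ((u + v) / 2) := by
  match hi with
  | Sum.inr _ => trivial
  | Sum.inl a => simp only [hiSat] at *; linarith

lemma midpoint_mem {m n : ℕ} (G : MILP m n) (x y : Fin n → ℝ)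
    (hx : x ∈ lpFeasSet G) (hy : y ∈ lpFeasSet G) :
    (fun j => (x j + y j) / 2) ∈ lpFeasSet G := by
  constructor
  · intro i
    have hsum : (∑ j, MILP.A G i j * ((x j + y j) / 2))
        = ((∑ j, MILP.A G i j * x j) + ∑ j, MILP.A G i j * y j) / 2 := by
      rw [← Finset.sum_add_distrib, Finset.sum_div]
      exact Finset.sum_congr rfl fun j _ => by ring
    rw [hsum]
    exact senseRel_mid _ _ _ _ (hx.1 i) (hy.1 i)
  · intro j
    exact ⟨loSat_mid _ _ _ (hx.2 j).1 (hy.2 j).1, hiSat_mid _ _ _ (hx.2 j).2 (hy.2 j).2⟩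

lemma minNormOpt_unique {m n : ℕ} (G : MILP m n) (x y : Fin n → ℝ)
    (hx : IsMinNormOpt G x) (hy : IsOptSol G y) (hn : euclNorm y ≤ euclNorm x) : x = y := by
  have hobj : (∑ j, MILP.c G j * x j) = ∑ j, MILP.c G j * y j := by
    have h1 := hx.1.2
    have h2 := hy.2
    rw [← h2] at h1
    exact EReal.coe_eq_coe_iff.1 h1
  set z : Fin n → ℝ := fun j => (x j + y j) / 2 with hz
  have hzfeas : z ∈ lpFeasSet G := midpoint_mem G x y hx.1.1 hy.1
  have hzobj : (∑ j, MILP.c G j * z j) = ∑ j, MILP.c G j * x j := by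
    have : (∑ j, MILP.c G j * z j)
        = ((∑ j, MILP.c G j * x j) + ∑ j, MILP.c G j * y j) / 2 := by
      rw [← Finset.sum_add_distrib, Finset.sum_div]
      exact Finset.sum_congr rfl fun j _ => by simp only [hz]; ring
    rw [this, ← hobj]
    ring
  have hzopt : IsOptSol G z := by
    refine ⟨hzfeas, ?_⟩
    rw [show ((∑ j, MILP.c G j * z j : ℝ) : EReal) = ((∑ j, MILP.c G j * x j : ℝ) : EReal)
      from EReal.coe_eq_coe_iff.2 hzobj]
    exact hx.1.2
  have hminz : euclNorm x ≤ euclNorm z := hx.2 z hzopt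
  have hzsum : ∑ j, x j ^ 2 ≤ ∑ j, z j ^ 2 := by
    have h0 : (0:ℝ) ≤ ∑ j, z j ^ 2 := Finset.sum_nonneg fun j _ => sq_nonneg _
    exact (Real.sqrt_le_sqrt_iff h0).1 hminz
  have hyx : ∑ j, y j ^ 2 ≤ ∑ j, x j ^ 2 := by
    have h0 : (0:ℝ) ≤ ∑ j, x j ^ 2 := Finset.sum_nonneg fun j _ => sq_nonneg _
    exact (Real.sqrt_le_sqrt_iff h0).1 hn
  have hid : (∑ j, z j ^ 2)
      = ((∑ j, x j ^ 2) + ∑ j, y j ^ 2) / 2 - ∑ j, ((x j - y j) / 2) ^ 2 := by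
    rw [← Finset.sum_add_distrib, Finset.sum_div, ← Finset.sum_sub_distrib]
    exact Finset.sum_congr rfl fun j _ => by simp only [hz]; ring
  have hQ0 : (0:ℝ) ≤ ∑ j, ((x j - y j) / 2) ^ 2 := Finset.sum_nonneg fun j _ => sq_nonneg _
  have hQ : (∑ j, ((x j - y j) / 2) ^ 2) = 0 := by linarith
  have hall := (Finset.sum_eq_zero_iff_of_nonneg (fun j _ => sq_nonneg ((x j - y j)/2))).1 hQ
  funext j
  have := hall j (Finset.mem_univ j)
  have h2 : ((x j - y j) / 2) = 0 := by
    exact pow_eq_zero_iff (n := 2) (by norm_num) |>.1 this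
  linarith

/-- singleton extraction from multiset equality via a flag predicate -/
lemma eq_of_map_eq_flag {ι β : Type*} [DecidableEq ι] (s : Finset ι) (f g : ι → β)
    (P : β → Prop) [DecidablePred P]
    (hfg : s.val.map f = s.val.map g) (i0 i1 : ι) (hi0 : i0 ∈ s) (hi1 : i1 ∈ s)
    (hf : ∀ i ∈ s, P (f i) ↔ i = i0) (hg : ∀ i ∈ s, P (g i) ↔ i = i1) :
    f i0 = g i1 := by
  classical
  have h1 := congrArg (Multiset.filter P) hfg
  rw [Multiset.filter_map, Multiset.filter_map] at h1
  have e1 : Multiset.filter (P ∘ f) s.val = {i0} := by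
    rw [← Finset.filter_val]
    have e : s.filter (P ∘ f) = {i0} := by
      ext i
      simp only [Finset.mem_filter, Finset.mem_singleton, Function.comp]
      constructor
      · rintro ⟨hi, hP⟩; exact (hf i hi).1 hP
      · rintro rfl; exact ⟨hi0, (hf _ hi0).2 rfl⟩
    rw [e]
    rfl
  have e2 : Multiset.filter (P ∘ g) s.val = {i1} := by
    rw [← Finset.filter_val]
    have e : s.filter (P ∘ g) = {i1} := by
      ext i
      simp only [Finset.mem_filter, Finset.mem_singleton, Function.comp]
      constructor
      · rintro ⟨hi, hP⟩; exact (hg i hi).1 hP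
      · rintro rfl; exact ⟨hi1, (hg _ hi1).2 rfl⟩
    rw [e]
    rfl
  rw [e1, e2, Multiset.map_singleton, Multiset.map_singleton] at h1
  exact Multiset.singleton_inj.1 h1

/-- filtered sums of values extracted from equal multisets of pairs -/
lemma sum_filter_eq_of_pairmap_eq {ι κ α V : Type*} (s : Finset ι) (t : Finset κ)
    (c : ι → α) (v : ι → V) (d : κ → α) (w : κ → V) (F : V → ℝ)
    (heq : s.val.map (fun i => (c i, v i)) = t.val.map (fun i => (d i, w i))) (k : α) :
    ∑ i ∈ s.filter (fun i => c i = k), F (v i)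
      = ∑ i ∈ t.filter (fun i => d i = k), F (w i) := by
  classical
  have h1 := congrArg (fun M : Multiset (α × V) =>
    ((M.filter (fun z => z.1 = k)).map (fun z => F z.2)).sum) heq
  simp only [Multiset.filter_map, Multiset.map_map] at h1
  rw [Finset.sum_eq_multiset_sum, Finset.sum_eq_multiset_sum,
    Finset.filter_val, Finset.filter_val]
  exact h1

lemma transfer {m n : ℕ} (G : MILP m n) (j1 j2 : Fin n)
    (h : ∀ l, Finset.univ.val.map (fun j => (fwl G l).2 j j1)
            = Finset.univ.val.map (fun j => (fwl G l).2 j j2)) :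
    (MILP.c G j1 = MILP.c G j2 ∧ MILP.lo G j1 = MILP.lo G j2 ∧
      MILP.hi G j1 = MILP.hi G j2 ∧ MILP.isInt G j1 = MILP.isInt G j2) ∧
    (∀ lo0 hi0, lpValMod G j2 lo0 hi0 ≤ lpValMod G j1 lo0 hi0) ∧
    (∀ x, IsMinNormOpt G x → x j1 = x j2) := by
  classical
  obtain ⟨L, hs⟩ := exists_stableAt G
  -- diagonal colors agree at every level
  have hdiag : ∀ l, (fwl G l).2 j1 j1 = (fwl G l).2 j2 j2 := by
    intro l
    refine eq_of_map_eq_flag Finset.univ _ _ (fun t => wwFlag l t = true) (h l) j1 j2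
      (Finset.mem_univ _) (Finset.mem_univ _) (fun j _ => ?_) (fun j _ => ?_)
    · simp [wwFlag_fwl]
    · simp [wwFlag_fwl]
  -- feature transfer on variables
  have featW : ∀ j j', (fwl G L).2 j j1 = (fwl G L).2 j' j2 →
      MILP.c G j = MILP.c G j' ∧ MILP.lo G j = MILP.lo G j' ∧
      MILP.hi G j = MILP.hi G j' ∧ MILP.isInt G j = MILP.isInt G j' := by
    intro j j' hjj'
    have hfeat := congrArg (wwFeat L) hjj'
    rw [wwFeat_fwl, wwFeat_fwl] at hfeat
    exact ⟨congrArg (fun t => t.1) hfeat, congrArg (fun t => t.2.1) hfeat,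
      congrArg (fun t => t.2.2.1) hfeat, congrArg (fun t => t.2.2.2) hfeat⟩
  have flagW : ∀ j j', (fwl G L).2 j j1 = (fwl G L).2 j' j2 → (j = j1 ↔ j' = j2) := by
    intro j j' hjj'
    have hflag := congrArg (wwFlag L) hjj'
    rw [wwFlag_fwl, wwFlag_fwl] at hflag
    exact decide_eq_decide.1 hflag
  have featV : ∀ i i', (fwl G L).1 i j1 = (fwl G L).1 i' j2 →
      MILP.b G i = MILP.b G i' ∧ MILP.sense G i = MILP.sense G i' := by
    intro i i' hii'
    have hfeat := congrArg (vwFeatV L) hii'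
    rw [vwFeatV_fwl, vwFeatV_fwl] at hfeat
    exact ⟨congrArg (fun t => t.1) hfeat, congrArg (fun t => t.2) hfeat⟩
  -- multiset equality of marked constraint colors
  have hA : Finset.univ.val.map (fun i => (fwl G L).1 i j1)
      = Finset.univ.val.map (fun i => (fwl G L).1 i j2) := by
    have h2 := congrArg Prod.snd (hdiag (L+1))
    rw [fwl2_succ, fwl2_succ] at h2
    have h3 := congrArg (Multiset.map Prod.fst) h2
    rw [Multiset.map_map, Multiset.map_map] at h3
    exact h3
  -- fiber counts
  have cntW : ∀ k, (Finset.univ.filter (fun j => (fwl G L).2 j j1 = k)).card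
      = (Finset.univ.filter (fun j => (fwl G L).2 j j2 = k)).card :=
    fun k => filter_card_eq_of_map_eq Finset.univ _ _ (h L) k
  have cntA : ∀ k, (Finset.univ.filter (fun i => (fwl G L).1 i j1 = k)).card
      = (Finset.univ.filter (fun i => (fwl G L).1 i j2 = k)).card :=
    fun k => filter_card_eq_of_map_eq Finset.univ _ _ hA k
  -- the structural sum identities from stability
  have F3 : ∀ (i i' : Fin m), (fwl G L).1 i j1 = (fwl G L).1 i' j2 → ∀ k : WWColor L,
      (∑ u ∈ Finset.univ.filter (fun u => (fwl G L).2 u j1 = k), MILP.A G i u)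
      = ∑ u ∈ Finset.univ.filter (fun u => (fwl G L).2 u j2 = k), MILP.A G i' u := by
    intro i i' hii' k
    have hL1 : (fwl G (L+1)).1 i j1 = (fwl G (L+1)).1 i' j2 := hs.1 (i, j1) (i', j2) hii'
    have h2 : Finset.univ.val.map (fun u => ((fwl G L).2 u j1, (fwl G L).1 i u))
        = Finset.univ.val.map (fun u => ((fwl G L).2 u j2, (fwl G L).1 i' u)) := by
      have := congrArg Prod.snd hL1
      rwa [fwl1_succ, fwl1_succ] at this
    have h3 := sum_filter_eq_of_pairmap_eq Finset.univ Finset.univ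
      (fun u => (fwl G L).2 u j1) (fun u => (fwl G L).1 i u)
      (fun u => (fwl G L).2 u j2) (fun u => (fwl G L).1 i' u) (vwA L) h2 k
    calc (∑ u ∈ Finset.univ.filter (fun u => (fwl G L).2 u j1 = k), MILP.A G i u)
        = ∑ u ∈ Finset.univ.filter (fun u => (fwl G L).2 u j1 = k), vwA L ((fwl G L).1 i u) :=
          Finset.sum_congr rfl fun u _ => (vwA_fwl G L i u).symm
      _ = ∑ u ∈ Finset.univ.filter (fun u => (fwl G L).2 u j2 = k), vwA L ((fwl G L).1 i' u) := h3
      _ = ∑ u ∈ Finset.univ.filter (fun u => (fwl G L).2 u j2 = k), MILP.A G i' u :=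
          Finset.sum_congr rfl fun u _ => vwA_fwl G L i' u
  have F5 : ∀ (u u' : Fin n), (fwl G L).2 u j1 = (fwl G L).2 u' j1 → ∀ k : VWColor L,
      (∑ i ∈ Finset.univ.filter (fun i => (fwl G L).1 i j1 = k), MILP.A G i u)
      = ∑ i ∈ Finset.univ.filter (fun i => (fwl G L).1 i j1 = k), MILP.A G i u' := by
    intro u u' huu' k
    have hL1 : (fwl G (L+1)).2 u j1 = (fwl G (L+1)).2 u' j1 := hs.2 (u, j1) (u', j1) huu'
    have h2 : Finset.univ.val.map (fun i => ((fwl G L).1 i j1, (fwl G L).1 i u))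
        = Finset.univ.val.map (fun i => ((fwl G L).1 i j1, (fwl G L).1 i u')) := by
      have := congrArg Prod.snd hL1
      rwa [fwl2_succ, fwl2_succ] at this
    have h3 := sum_filter_eq_of_pairmap_eq Finset.univ Finset.univ
      (fun i => (fwl G L).1 i j1) (fun i => (fwl G L).1 i u)
      (fun i => (fwl G L).1 i j1) (fun i => (fwl G L).1 i u') (vwA L) h2 k
    calc (∑ i ∈ Finset.univ.filter (fun i => (fwl G L).1 i j1 = k), MILP.A G i u)
        = ∑ i ∈ Finset.univ.filter (fun i => (fwl G L).1 i j1 = k), vwA L ((fwl G L).1 i u) :=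
          Finset.sum_congr rfl fun i _ => (vwA_fwl G L i u).symm
      _ = ∑ i ∈ Finset.univ.filter (fun i => (fwl G L).1 i j1 = k), vwA L ((fwl G L).1 i u') := h3
      _ = ∑ i ∈ Finset.univ.filter (fun i => (fwl G L).1 i j1 = k), MILP.A G i u' :=
          Finset.sum_congr rfl fun i _ => vwA_fwl G L i u'
  -- class sizes
  set nB : WWColor L → ℕ :=
    fun k => (Finset.univ.filter (fun j => (fwl G L).2 j j1 = k)).card with hnB
  set mAc : VWColor L → ℕ :=
    fun k => (Finset.univ.filter (fun i => (fwl G L).1 i j1 = k)).card with hmAc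
  have hnB_b : ∀ j : Fin n, 0 < nB ((fwl G L).2 j j1) := by
    intro j
    apply Finset.card_pos.2
    exact ⟨j, Finset.mem_filter.2 ⟨Finset.mem_univ j, rfl⟩⟩
  have hnB_b' : ∀ j' : Fin n, 0 < nB ((fwl G L).2 j' j2) := by
    intro j'
    have : nB ((fwl G L).2 j' j2)
        = (Finset.univ.filter (fun j => (fwl G L).2 j j2 = (fwl G L).2 j' j2)).card :=
      cntW _
    rw [this]
    apply Finset.card_pos.2
    exact ⟨j', Finset.mem_filter.2 ⟨Finset.mem_univ j', rfl⟩⟩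
  have hmA_a' : ∀ i' : Fin m, 0 < mAc ((fwl G L).1 i' j2) := by
    intro i'
    have : mAc ((fwl G L).1 i' j2)
        = (Finset.univ.filter (fun i => (fwl G L).1 i j2 = (fwl G L).1 i' j2)).card :=
      cntA _
    rw [this]
    apply Finset.card_pos.2
    exact ⟨i', Finset.mem_filter.2 ⟨Finset.mem_univ i', rfl⟩⟩
  -- weights
  set w : Fin n → Fin n → ℝ := fun j j' =>
    if (fwl G L).2 j j1 = (fwl G L).2 j' j2 then ((nB ((fwl G L).2 j' j2) : ℝ))⁻¹ else 0
    with hw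
  set vv : Fin m → Fin m → ℝ := fun i i' =>
    if (fwl G L).1 i j1 = (fwl G L).1 i' j2 then ((mAc ((fwl G L).1 i' j2) : ℝ))⁻¹ else 0
    with hvv
  have hw0 : ∀ j j', 0 ≤ w j j' := by
    intro j j'
    simp only [hw]
    split_ifs
    · positivity
    · exact le_refl 0
  have hv0 : ∀ i i', 0 ≤ vv i i' := by
    intro i i'
    simp only [hvv]
    split_ifs
    · positivity
    · exact le_refl 0
  -- row sums of w equal 1 (fixed source variable j)
  have hwrow : ∀ j : Fin n, (∑ j', w j j') = 1 := by
    intro j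
    have e1 : (∑ j', w j j')
        = ∑ j' ∈ Finset.univ.filter (fun j' => (fwl G L).2 j j1 = (fwl G L).2 j' j2),
            ((nB ((fwl G L).2 j j1) : ℝ))⁻¹ := by
      rw [Finset.sum_filter]
      apply Finset.sum_congr rfl
      intro j' _
      simp only [hw]
      split_ifs with hcond
      · rw [hcond]
      · rfl
    rw [e1, Finset.sum_const, nsmul_eq_mul]
    have e2 : (Finset.univ.filter (fun j' => (fwl G L).2 j j1 = (fwl G L).2 j' j2)).card
        = nB ((fwl G L).2 j j1) := by
      calc (Finset.univ.filter (fun j' => (fwl G L).2 j j1 = (fwl G L).2 j' j2)).card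
          = (Finset.univ.filter (fun j' => (fwl G L).2 j' j2 = (fwl G L).2 j j1)).card := by
            apply congrArg Finset.card
            apply Finset.filter_congr
            intro u _
            exact eq_comm
        _ = nB ((fwl G L).2 j j1) := (cntW ((fwl G L).2 j j1)).symm
    rw [e2]
    have hne : ((nB ((fwl G L).2 j j1) : ℝ)) ≠ 0 := by exact_mod_cast (hnB_b j).ne'
    field_simp
  -- column sums of w equal 1 (fixed target variable j')
  have hwcol : ∀ j' : Fin n, (∑ j, w j j') = 1 := by
    intro j'
    have e1 : (∑ j, w j j')
        = ∑ j ∈ Finset.univ.filter (fun j => (fwl G L).2 j j1 = (fwl G L).2 j' j2),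
            ((nB ((fwl G L).2 j' j2) : ℝ))⁻¹ := by
      rw [Finset.sum_filter]
    rw [e1, Finset.sum_const, nsmul_eq_mul]
    have e2 : (Finset.univ.filter (fun j => (fwl G L).2 j j1 = (fwl G L).2 j' j2)).card
        = nB ((fwl G L).2 j' j2) := rfl
    rw [e2]
    have hne : ((nB ((fwl G L).2 j' j2) : ℝ)) ≠ 0 := by exact_mod_cast (hnB_b' j').ne'
    field_simp
  have hvcol : ∀ i' : Fin m, (∑ i, vv i i') = 1 := by
    intro i'
    have e1 : (∑ i, vv i i')
        = ∑ i ∈ Finset.univ.filter (fun i => (fwl G L).1 i j1 = (fwl G L).1 i' j2),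
            ((mAc ((fwl G L).1 i' j2) : ℝ))⁻¹ := by
      rw [Finset.sum_filter]
    rw [e1, Finset.sum_const, nsmul_eq_mul]
    have e2 : (Finset.univ.filter (fun i => (fwl G L).1 i j1 = (fwl G L).1 i' j2)).card
        = mAc ((fwl G L).1 i' j2) := rfl
    rw [e2]
    have hne : ((mAc ((fwl G L).1 i' j2) : ℝ)) ≠ 0 := by exact_mod_cast (hmA_a' i').ne'
    field_simp
  -- the main cross identity
  have hstar : ∀ (jj : Fin n) (i' : Fin m),
      (∑ j', w jj j' * MILP.A G i' j') = ∑ i, vv i i' * MILP.A G i jj := by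
    intro jj i'
    have eL : (∑ j', w jj j' * MILP.A G i' j')
        = (∑ j' ∈ Finset.univ.filter (fun j' => (fwl G L).2 j' j2 = (fwl G L).2 jj j1),
            MILP.A G i' j') * ((nB ((fwl G L).2 jj j1) : ℝ))⁻¹ := by
      rw [Finset.sum_mul]
      rw [Finset.sum_filter]
      apply Finset.sum_congr rfl
      intro j' _
      simp only [hw]
      by_cases hcond : (fwl G L).2 jj j1 = (fwl G L).2 j' j2
      · rw [if_pos hcond, if_pos hcond.symm, hcond]
        ring
      · rw [if_neg hcond, if_neg fun hc => hcond hc.symm]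
        ring
    have eR : (∑ i, vv i i' * MILP.A G i jj)
        = (∑ i ∈ Finset.univ.filter (fun i => (fwl G L).1 i j1 = (fwl G L).1 i' j2),
            MILP.A G i jj) * ((mAc ((fwl G L).1 i' j2) : ℝ))⁻¹ := by
      rw [Finset.sum_mul]
      rw [Finset.sum_filter]
      apply Finset.sum_congr rfl
      intro i _
      simp only [hvv]
      by_cases hcond : (fwl G L).1 i j1 = (fwl G L).1 i' j2
      · rw [if_pos hcond, if_pos hcond]
        ring
      · rw [if_neg hcond, if_neg hcond]
        ring
    -- double counting
    have hdc : (mAc ((fwl G L).1 i' j2) : ℝ)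
          * (∑ j' ∈ Finset.univ.filter (fun j' => (fwl G L).2 j' j2 = (fwl G L).2 jj j1),
              MILP.A G i' j')
        = (nB ((fwl G L).2 jj j1) : ℝ)
          * (∑ i ∈ Finset.univ.filter (fun i => (fwl G L).1 i j1 = (fwl G L).1 i' j2),
              MILP.A G i jj) := by
      have hblock : (∑ i ∈ Finset.univ.filter (fun i => (fwl G L).1 i j1 = (fwl G L).1 i' j2),
            ∑ u ∈ Finset.univ.filter (fun u => (fwl G L).2 u j1 = (fwl G L).2 jj j1),
              MILP.A G i u)
          = (mAc ((fwl G L).1 i' j2) : ℝ)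
            * (∑ j' ∈ Finset.univ.filter (fun j' => (fwl G L).2 j' j2 = (fwl G L).2 jj j1),
                MILP.A G i' j') := by
        have e3 : ∀ i ∈ Finset.univ.filter (fun i => (fwl G L).1 i j1 = (fwl G L).1 i' j2),
            (∑ u ∈ Finset.univ.filter (fun u => (fwl G L).2 u j1 = (fwl G L).2 jj j1),
              MILP.A G i u)
            = ∑ j' ∈ Finset.univ.filter (fun j' => (fwl G L).2 j' j2 = (fwl G L).2 jj j1),
                MILP.A G i' j' := by
          intro i hi
          exact F3 i i' (Finset.mem_filter.1 hi).2 ((fwl G L).2 jj j1)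
        rw [Finset.sum_congr rfl e3, Finset.sum_const, nsmul_eq_mul]
      have hblock2 : (∑ i ∈ Finset.univ.filter (fun i => (fwl G L).1 i j1 = (fwl G L).1 i' j2),
            ∑ u ∈ Finset.univ.filter (fun u => (fwl G L).2 u j1 = (fwl G L).2 jj j1),
              MILP.A G i u)
          = (nB ((fwl G L).2 jj j1) : ℝ)
            * (∑ i ∈ Finset.univ.filter (fun i => (fwl G L).1 i j1 = (fwl G L).1 i' j2),
                MILP.A G i jj) := by
        rw [Finset.sum_comm]
        have e4 : ∀ u ∈ Finset.univ.filter (fun u => (fwl G L).2 u j1 = (fwl G L).2 jj j1),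
            (∑ i ∈ Finset.univ.filter (fun i => (fwl G L).1 i j1 = (fwl G L).1 i' j2),
              MILP.A G i u)
            = ∑ i ∈ Finset.univ.filter (fun i => (fwl G L).1 i j1 = (fwl G L).1 i' j2),
                MILP.A G i jj := by
          intro u hu
          exact F5 u jj (Finset.mem_filter.1 hu).2 ((fwl G L).1 i' j2)
        rw [Finset.sum_congr rfl e4, Finset.sum_const, nsmul_eq_mul]
      rw [← hblock, hblock2]
    rw [eL, eR]
    have hnBne : ((nB ((fwl G L).2 jj j1) : ℝ)) ≠ 0 := by
      exact_mod_cast (hnB_b jj).ne'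
    have hmAne : ((mAc ((fwl G L).1 i' j2) : ℝ)) ≠ 0 := by
      exact_mod_cast (hmA_a' i').ne'
    field_simp
    linarith [hdc]
  -- averaged point
  set T : (Fin n → ℝ) → (Fin n → ℝ) := fun x j' => ∑ j, w j j' * x j with hT
  have hTcons : ∀ (x : Fin n → ℝ) (i' : Fin m),
      (∑ j', MILP.A G i' j' * T x j') = ∑ i, vv i i' * ∑ j, MILP.A G i j * x j := by
    intro x i'
    calc (∑ j', MILP.A G i' j' * T x j')
        = ∑ j', ∑ j, MILP.A G i' j' * (w j j' * x j) := by
          apply Finset.sum_congr rfl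
          intro j' _
          simp only [hT]
          rw [Finset.mul_sum]
      _ = ∑ j, ∑ j', MILP.A G i' j' * (w j j' * x j) := Finset.sum_comm
      _ = ∑ j, (∑ j', w j j' * MILP.A G i' j') * x j := by
          apply Finset.sum_congr rfl
          intro j _
          rw [Finset.sum_mul]
          apply Finset.sum_congr rfl
          intro j' _
          ring
      _ = ∑ j, (∑ i, vv i i' * MILP.A G i j) * x j := by
          apply Finset.sum_congr rfl
          intro j _
          rw [hstar j i']
      _ = ∑ j, ∑ i, vv i i' * MILP.A G i j * x j := by
          apply Finset.sum_congr rfl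
          intro j _
          rw [Finset.sum_mul]
      _ = ∑ i, ∑ j, vv i i' * MILP.A G i j * x j := Finset.sum_comm
      _ = ∑ i, vv i i' * ∑ j, MILP.A G i j * x j := by
          apply Finset.sum_congr rfl
          intro i _
          rw [Finset.mul_sum]
          apply Finset.sum_congr rfl
          intro j _
          ring
  have hTobj : ∀ x : Fin n → ℝ,
      (∑ j', MILP.c G j' * T x j') = ∑ j, MILP.c G j * x j := by
    intro x
    calc (∑ j', MILP.c G j' * T x j')
        = ∑ j', ∑ j, MILP.c G j' * (w j j' * x j) := by
          apply Finset.sum_congr rfl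
          intro j' _
          simp only [hT]
          rw [Finset.mul_sum]
      _ = ∑ j, ∑ j', MILP.c G j' * (w j j' * x j) := Finset.sum_comm
      _ = ∑ j, ∑ j', w j j' * (MILP.c G j * x j) := by
          apply Finset.sum_congr rfl
          intro j _
          apply Finset.sum_congr rfl
          intro j' _
          by_cases hcond : (fwl G L).2 j j1 = (fwl G L).2 j' j2
          · have hc : MILP.c G j = MILP.c G j' := (featW j j' hcond).1
            rw [← hc]
            ring
          · have hwz : w j j' = 0 := by simp only [hw]; rw [if_neg hcond]
            rw [hwz]
            ring
      _ = ∑ j, (∑ j', w j j') * (MILP.c G j * x j) := by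
          apply Finset.sum_congr rfl
          intro j _
          rw [Finset.sum_mul]
      _ = ∑ j, MILP.c G j * x j := by
          apply Finset.sum_congr rfl
          intro j _
          rw [hwrow j]
          ring
  have hTnorm : ∀ x : Fin n → ℝ, (∑ j', (T x j') ^ 2) ≤ ∑ j, (x j) ^ 2 := by
    intro x
    have step1 : ∀ j' : Fin n, (T x j') ^ 2 ≤ ∑ j, w j j' * (x j) ^ 2 := by
      intro j'
      have hCS := Finset.sum_mul_sq_le_sq_mul_sq Finset.univ
        (fun j => Real.sqrt (w j j')) (fun j => Real.sqrt (w j j') * x j)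
      have e1 : (∑ j, Real.sqrt (w j j') * (Real.sqrt (w j j') * x j)) = T x j' := by
        simp only [hT]
        apply Finset.sum_congr rfl
        intro j _
        rw [← mul_assoc, Real.mul_self_sqrt (hw0 j j')]
      have e2 : (∑ j, Real.sqrt (w j j') ^ 2) = 1 := by
        rw [show (∑ j, Real.sqrt (w j j') ^ 2) = ∑ j, w j j' from
          Finset.sum_congr rfl fun j _ => Real.sq_sqrt (hw0 j j')]
        exact hwcol j'
      have e3 : (∑ j, (Real.sqrt (w j j') * x j) ^ 2) = ∑ j, w j j' * (x j) ^ 2 := by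
        apply Finset.sum_congr rfl
        intro j _
        rw [mul_pow, Real.sq_sqrt (hw0 j j')]
      rw [e1, e2, e3, one_mul] at hCS
      exact hCS
    calc (∑ j', (T x j') ^ 2) ≤ ∑ j', ∑ j, w j j' * (x j) ^ 2 :=
          Finset.sum_le_sum fun j' _ => step1 j'
      _ = ∑ j, ∑ j', w j j' * (x j) ^ 2 := Finset.sum_comm
      _ = ∑ j, (x j) ^ 2 := by
          apply Finset.sum_congr rfl
          intro j _
          rw [← Finset.sum_mul, hwrow j, one_mul]
  have hTj2 : ∀ x : Fin n → ℝ, T x j2 = x j1 := by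
    intro x
    have hsing : Finset.univ.filter (fun u => (fwl G L).2 u j1 = (fwl G L).2 j2 j2)
        = {j1} := by
      ext u
      simp only [Finset.mem_filter, Finset.mem_univ, true_and, Finset.mem_singleton]
      constructor
      · intro hu
        exact (flagW u j2 hu).2 rfl
      · rintro rfl
        exact hdiag L
    have hone : nB ((fwl G L).2 j2 j2) = 1 := by
      have : nB ((fwl G L).2 j2 j2)
          = (Finset.univ.filter (fun u => (fwl G L).2 u j1 = (fwl G L).2 j2 j2)).card := rfl
      rw [this, hsing]
      rfl
    simp only [hT]
    rw [Finset.sum_eq_single j1]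
    · have hcond : (fwl G L).2 j1 j1 = (fwl G L).2 j2 j2 := hdiag L
      simp only [hw]
      rw [if_pos hcond, hone]
      norm_num
    · intro u _ hu
      have hwz : w u j2 = 0 := by
        simp only [hw]
        rw [if_neg]
        intro hcond
        exact hu ((flagW u j2 hcond).2 rfl)
      rw [hwz, zero_mul]
    · intro hj
      exact absurd (Finset.mem_univ j1) hj
  -- feasibility transfer
  have hTfeas : ∀ lo0 hi0 (x : Fin n → ℝ), x ∈ feasSetMod G j1 lo0 hi0 →
      T x ∈ feasSetMod G j2 lo0 hi0 := by
    intro lo0 hi0 x hx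
    obtain ⟨hxc, hxb, hxlo, hxhi⟩ := hx
    refine ⟨?_, ?_, ?_, ?_⟩
    · intro i'
      show senseRel (MILP.sense G i') (∑ j, MILP.A G i' j * T x j) (MILP.b G i')
      rw [hTcons x i']
      apply senseRel_wavg Finset.univ (MILP.sense G i') (MILP.b G i')
        (fun i => vv i i') (fun i => ∑ j, MILP.A G i j * x j)
        (fun i _ => hv0 i i') (hvcol i')
      intro i _ hne
      have hcond : (fwl G L).1 i j1 = (fwl G L).1 i' j2 := by
        by_contra hcc
        exact hne (by simp only [hvv]; rw [if_neg hcc])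
      obtain ⟨hb, hsen⟩ := featV i i' hcond
      rw [← hb, ← hsen]
      exact hxc i
    · intro j' hj'
      have hsupport : ∀ j : Fin n, w j j' ≠ 0 →
          (fwl G L).2 j j1 = (fwl G L).2 j' j2 ∧ j ≠ j1 := by
        intro j hne
        have hcond : (fwl G L).2 j j1 = (fwl G L).2 j' j2 := by
          by_contra hcc
          exact hne (by simp only [hw]; rw [if_neg hcc])
        refine ⟨hcond, ?_⟩
        intro hj1
        exact hj' ((flagW j j' hcond).1 hj1)
      constructor
      · show loSat (MILP.lo G j') (T x j')
        have : T x j' = ∑ j, w j j' * x j := by simp only [hT]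
        rw [this]
        apply loSat_wavg Finset.univ (MILP.lo G j') (fun j => w j j') x
          (fun j _ => hw0 j j') (hwcol j')
        intro j _ hne
        obtain ⟨hcond, hjne⟩ := hsupport j hne
        obtain ⟨-, hlo, -, -⟩ := featW j j' hcond
        rw [← hlo]
        exact (hxb j hjne).1
      · show hiSat (MILP.hi G j') (T x j')
        have : T x j' = ∑ j, w j j' * x j := by simp only [hT]
        rw [this]
        apply hiSat_wavg Finset.univ (MILP.hi G j') (fun j => w j j') x
          (fun j _ => hw0 j j') (hwcol j')
        intro j _ hne
        obtain ⟨hcond, hjne⟩ := hsupport j hne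
        obtain ⟨-, -, hhi, -⟩ := featW j j' hcond
        rw [← hhi]
        exact (hxb j hjne).2
    · show loSat lo0 (T x j2)
      rw [hTj2 x]
      exact hxlo
    · show hiSat hi0 (T x j2)
      rw [hTj2 x]
      exact hxhi
  refine ⟨featW j1 j2 (hdiag L), ?_, ?_⟩
  · intro lo0 hi0
    apply lpVal_le_of_exists
    intro x hx
    exact ⟨T x, hTfeas lo0 hi0 x hx, hTobj x⟩
  · intro x hx
    have hx1 : x ∈ feasSetMod G j1 (MILP.lo G j1) (MILP.hi G j1) := by
      rw [feasSetMod_self]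
      exact hx.1.1
    have hTx2 : T x ∈ feasSetMod G j2 (MILP.lo G j1) (MILP.hi G j1) :=
      hTfeas _ _ x hx1
    obtain ⟨hc12, hlo12, hhi12, -⟩ := featW j1 j2 (hdiag L)
    rw [hlo12, hhi12, feasSetMod_self] at hTx2
    have hTopt : IsOptSol G (T x) := by
      refine ⟨hTx2, ?_⟩
      rw [show ((∑ j, MILP.c G j * T x j : ℝ) : EReal)
          = ((∑ j, MILP.c G j * x j : ℝ) : EReal) from EReal.coe_eq_coe_iff.2 (hTobj x)]
      exact hx.1.2
    have hnle : euclNorm (T x) ≤ euclNorm x := Real.sqrt_le_sqrt (hTnorm x)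
    have hxy := minNormOpt_unique G x (T x) hx hTopt hnle
    have h2 : x j2 = T x j2 := congrFun hxy j2
    rw [hTj2 x] at h2
    exact h2.symm
end SBAux




/-- In a MILP instance with real-valued SB scores, if two variables
`j₁, j₂` satisfy `{{C_l^{WW}(j,j₁) : j}} = {{C_l^{WW}(j,j₂) : j}}` for every round `l` of
the 2-FWL test, then they have equal SB scores. -/
theorem SB_entry_eq_of_same_WW_multiset
    {m n : ℕ} (G : MILP m n) (hSB : SBRealValued G) (j1 j2 : Fin n)
    (h : ∀ l, Finset.univ.val.map (fun j => (fwl G l).2 j j1)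
            = Finset.univ.val.map (fun j => (fwl G l).2 j j2)) :
    SB G j1 = SB G j2 := by
  classical
  obtain ⟨hfeat, hle12, hx12⟩ := SBAux.transfer G j1 j2 h
  obtain ⟨hfeat', hle21, hx21⟩ := SBAux.transfer G j2 j1 (fun l => (h l).symm)
  have hxs : IsMinNormOpt G (xstar G) := by
    rw [xstar, dif_pos hSB.1]
    exact hSB.1.choose_spec
  have hxeq : xstar G j1 = xstar G j2 := hx12 _ hxs
  obtain ⟨hc, hlo, hhi, hint⟩ := hfeat
  have hdown : branchDown G j1 = branchDown G j2 := by
    unfold branchDown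
    rw [hxeq, hlo]
    exact le_antisymm (hle21 _ _) (hle12 _ _)
  have hup : branchUp G j1 = branchUp G j2 := by
    unfold branchUp
    rw [hxeq, hhi]
    exact le_antisymm (hle21 _ _) (hle12 _ _)
  simp only [SB]
  rw [hint, hdown, hup]
end
end

section
/- Let G and Ḡ be MILP instances of size (m,n). Then G ∼₂^W Ḡ if and only if F(G) = F(Ḡ) for every 2-FGNN F of size (m,n). -/
open scoped BigOperators Classical
open MeasureTheory

noncomputable section

/-!
Every 2-FGNN can be run on colors instead of instances: its layer-`l` features are functions of
the round-`l` 2-FWL colors, and its output at `j` is a function of the two multisets compared by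
`∼₂^W`. Conversely, only finitely many colors occur in `G` and `H`, so by the Tietze extension
theorem there are continuous layers carrying one-hot codes of colors to one-hot codes of the
refined colors. A sum of one-hot codes counts multiplicities, so it determines the multiset;
a readout measuring the distance to the code of `G` at a vertex where the multisets differ then
separates `G` from `H`.
-/

section Interpolation

universe u v w

variable {X : Type u} {Y : Type v} {α : Type w} [TopologicalSpace X] [NormalSpace X] [T1Space X]
  [TopologicalSpace Y] [TietzeExtension.{u, v} Y]

theorem Set.Finite.exists_continuous_eqOn {s : Set X} (hs : s.Finite) (v : X → Y) :
    ∃ f : X → Y, Continuous f ∧ Set.EqOn f v s := by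
  have : Finite s := hs.to_subtype
  obtain ⟨f, hf⟩ := ContinuousMap.exists_restrict_eq hs.isClosed
    ⟨s.domRestrict v, continuous_of_discreteTopology⟩
  exact ⟨f, f.continuous, fun x hx => congrArg (· ⟨x, hx⟩) hf⟩

theorem Set.Finite.exists_continuous_comp_eqOn [Nonempty Y] {S : Set α} (hS : S.Finite)
    {e : α → X} (he : S.InjOn e) (v : α → Y) :
    ∃ f : X → Y, Continuous f ∧ ∀ a ∈ S, f (e a) = v a := by
  obtain ⟨f, hf, hfv⟩ := (hS.image e).exists_continuous_eqOn
    (Function.extend (S.domRestrict e) (S.domRestrict v) fun _ => Classical.arbitrary Y)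
  refine ⟨f, hf, fun a ha => ?_⟩
  rw [hfv (Set.mem_image_of_mem e ha)]
  exact he.injective.extend_apply _ _ ⟨a, ha⟩

end Interpolation

theorem Multiset.sum_map_ite_eq_count {α R : Type*} [DecidableEq α] [AddCommMonoidWithOne R]
    (M : Multiset α) (c : α) : (M.map fun a => if a = c then (1 : R) else 0).sum = M.count c := by
  rw [Finset.sum_multiset_map_count]
  simp only [smul_ite, nsmul_one, smul_zero, Finset.sum_ite_eq', Multiset.mem_toFinset]
  split_ifs with h
  · rfl
  · simp [Multiset.count_eq_zero_of_notMem h]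

section OneHot

variable {α : Type*} {S : Finset α} {D : ℕ}

def oneHot (S : Finset α) (D : ℕ) (c : α) : Fin D → ℝ := fun k =>
  if h : c ∈ S then if (k : ℕ) = S.equivFin ⟨c, h⟩ then 1 else 0 else 0

def oneHotIndex (hD : S.card ≤ D) {c : α} (hc : c ∈ S) : Fin D :=
  Fin.castLE hD (S.equivFin ⟨c, hc⟩)

theorem oneHot_apply_oneHotIndex (hD : S.card ≤ D) {a c : α} (ha : a ∈ S) (hc : c ∈ S) :
    oneHot S D a (oneHotIndex hD hc) = if a = c then 1 else 0 := by
  have : (S.equivFin ⟨c, hc⟩ : ℕ) = S.equivFin ⟨a, ha⟩ ↔ a = c := by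
    rw [Fin.val_inj, S.equivFin.apply_eq_iff_eq, Subtype.mk.injEq, eq_comm]
  simp [oneHot, oneHotIndex, ha, this]

theorem sum_map_oneHot_apply_oneHotIndex (hD : S.card ≤ D) {c : α} (hc : c ∈ S)
    {M : Multiset α} (hM : ∀ a ∈ M, a ∈ S) :
    (M.map (oneHot S D)).sum (oneHotIndex hD hc) = M.count c := by
  rw [Pi.multiset_sum_apply, Multiset.map_map, Function.comp_def,
    Multiset.map_congr rfl fun a ha => oneHot_apply_oneHotIndex hD (hM a ha) hc]
  exact Multiset.sum_map_ite_eq_count M c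

theorem sum_map_oneHot_injective (hD : S.card ≤ D) {M M' : Multiset α}
    (hM : ∀ a ∈ M, a ∈ S) (hM' : ∀ a ∈ M', a ∈ S)
    (h : (M.map (oneHot S D)).sum = (M'.map (oneHot S D)).sum) : M = M' := by
  ext c
  by_cases hc : c ∈ S
  · exact_mod_cast (sum_map_oneHot_apply_oneHotIndex hD hc hM).symm.trans
      ((congrFun h _).trans (sum_map_oneHot_apply_oneHotIndex hD hc hM'))
  · rw [Multiset.count_eq_zero_of_notMem (hc ∘ hM c),
      Multiset.count_eq_zero_of_notMem (hc ∘ hM' c)]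

theorem oneHot_injOn (hD : S.card ≤ D) : Set.InjOn (oneHot S D) S := fun a ha a' ha' h =>
  Multiset.singleton_inj.mp <| sum_map_oneHot_injective hD (by simpa using ha)
    (by simpa using ha') (by simpa using h)

end OneHot

namespace FGNN2

variable {m n : ℕ}

/-- The layers of `N` read as functions of 2-FWL colors rather than of an instance. -/
def colorMap (N : FGNN2 m n) :
    (l : ℕ) → (VWColor l → Fin (N.d l) → ℝ) × (WWColor l → Fin (N.d l) → ℝ)
  | 0 => (fun c => N.p0 c, fun c => N.q0 c)
  | l + 1 =>
      (fun c => N.p l ((colorMap N l).1 c.1,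
        (c.2.map fun x => N.f l ((colorMap N l).2 x.1, (colorMap N l).1 x.2)).sum),
       fun c => N.q l ((colorMap N l).2 c.1,
        (c.2.map fun x => N.g l ((colorMap N l).1 x.1, (colorMap N l).1 x.2)).sum))

theorem st_eq_colorMap (N : FGNN2 m n) (G : MILP m n) (l : ℕ) :
    (∀ i j, (st N G l).1 i j = (colorMap N l).1 ((fwl G l).1 i j)) ∧
      ∀ j₁ j₂, (st N G l).2 j₁ j₂ = (colorMap N l).2 ((fwl G l).2 j₁ j₂) := by
  induction l with
  | zero => exact ⟨fun _ _ => rfl, fun _ _ => rfl⟩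
  | succ l ih =>
    refine ⟨fun i j => ?_, fun j₁ j₂ => ?_⟩ <;>
      simp only [st, colorMap, fwl, ih.1, ih.2, Multiset.map_map, Function.comp_def] <;> rfl

theorem eval_eq_colorMap (N : FGNN2 m n) (G : MILP m n) (j : Fin n) :
    N.eval G j = N.r
      (((Finset.univ.val.map fun i => (fwl G N.L).1 i j).map (colorMap N N.L).1).sum,
       ((Finset.univ.val.map fun j₁ => (fwl G N.L).2 j₁ j).map (colorMap N N.L).2).sum) := by
  simp only [eval, (st_eq_colorMap N G N.L).1, (st_eq_colorMap N G N.L).2, Multiset.map_map,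
    Function.comp_def]
  rfl

theorem eval_eq_of_fwlEquivW {G H : MILP m n} (h : FWLEquivW G H) (N : FGNN2 m n) :
    N.eval G = N.eval H :=
  funext fun j => by rw [eval_eq_colorMap, eval_eq_colorMap, (h N.L j).1, (h N.L j).2]

end FGNN2

section ColorSets

variable {m n : ℕ} (Ks : Finset (MILP m n))

def vwColors (l : ℕ) : Finset (VWColor l) :=
  Ks.biUnion fun K => Finset.univ.image fun p : Fin m × Fin n => (fwl K l).1 p.1 p.2

def wwColors (l : ℕ) : Finset (WWColor l) :=
  Ks.biUnion fun K => Finset.univ.image fun p : Fin n × Fin n => (fwl K l).2 p.1 p.2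

/-- The features `s` and `t` share the dimension `d l`, which must hold both kinds of codes. -/
def featDim (l : ℕ) : ℕ := (vwColors Ks l).card + (wwColors Ks l).card

def msgDim (l : ℕ) : ℕ :=
  (wwColors Ks l ×ˢ vwColors Ks l).card + (vwColors Ks l ×ˢ vwColors Ks l).card

/-- The one-hot codes of the multisets `{{C_l^{VW}(i,j)}}_i` and `{{C_l^{WW}(j₁,j)}}_{j₁}`
compared by `FWLEquivW`. -/
def colorCode (l : ℕ) (K : MILP m n) (j : Fin n) :
    (Fin (featDim Ks l) → ℝ) × (Fin (featDim Ks l) → ℝ) :=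
  (((Finset.univ.val.map fun i => (fwl K l).1 i j).map
      (oneHot (vwColors Ks l) (featDim Ks l))).sum,
   ((Finset.univ.val.map fun j₁ => (fwl K l).2 j₁ j).map
      (oneHot (wwColors Ks l) (featDim Ks l))).sum)

variable {Ks} {K : MILP m n}

theorem fwl_fst_mem_vwColors (hK : K ∈ Ks) (l : ℕ) (i : Fin m) (j : Fin n) :
    (fwl K l).1 i j ∈ vwColors Ks l :=
  Finset.mem_biUnion.mpr ⟨K, hK, Finset.mem_image_of_mem _ (Finset.mem_univ (i, j))⟩

theorem fwl_snd_mem_wwColors (hK : K ∈ Ks) (l : ℕ) (j₁ j₂ : Fin n) :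
    (fwl K l).2 j₁ j₂ ∈ wwColors Ks l :=
  Finset.mem_biUnion.mpr ⟨K, hK, Finset.mem_image_of_mem _ (Finset.mem_univ (j₁, j₂))⟩

theorem mem_vwColors_succ {l : ℕ} {c : VWColor (l + 1)} (hc : c ∈ vwColors Ks (l + 1)) :
    c.1 ∈ vwColors Ks l ∧ ∀ x ∈ c.2, x ∈ wwColors Ks l ×ˢ vwColors Ks l := by
  obtain ⟨K, hK, hc⟩ := Finset.mem_biUnion.mp hc
  obtain ⟨⟨i, j⟩, -, rfl⟩ := Finset.mem_image.mp hc
  refine ⟨fwl_fst_mem_vwColors hK l i j, fun x hx => ?_⟩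
  obtain ⟨j₁, -, rfl⟩ := Multiset.mem_map.mp (by simpa only [fwl] using hx)
  exact Finset.mem_product.mpr
    ⟨fwl_snd_mem_wwColors hK l j₁ j, fwl_fst_mem_vwColors hK l i j₁⟩

theorem mem_wwColors_succ {l : ℕ} {c : WWColor (l + 1)} (hc : c ∈ wwColors Ks (l + 1)) :
    c.1 ∈ wwColors Ks l ∧ ∀ x ∈ c.2, x ∈ vwColors Ks l ×ˢ vwColors Ks l := by
  obtain ⟨K, hK, hc⟩ := Finset.mem_biUnion.mp hc
  obtain ⟨⟨j₁, j₂⟩, -, rfl⟩ := Finset.mem_image.mp hc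
  refine ⟨fwl_snd_mem_wwColors hK l j₁ j₂, fun x hx => ?_⟩
  obtain ⟨i, -, rfl⟩ := Multiset.mem_map.mp (by simpa only [fwl] using hx)
  exact Finset.mem_product.mpr
    ⟨fwl_fst_mem_vwColors hK l i j₂, fwl_fst_mem_vwColors hK l i j₁⟩

theorem eq_of_colorCode_eq {K' : MILP m n} (hK : K ∈ Ks) (hK' : K' ∈ Ks) {l : ℕ} {j : Fin n}
    (h : colorCode Ks l K j = colorCode Ks l K' j) :
    Finset.univ.val.map (fun i => (fwl K l).1 i j) = Finset.univ.val.map (fun i => (fwl K' l).1 i j)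
      ∧ Finset.univ.val.map (fun j₁ => (fwl K l).2 j₁ j)
        = Finset.univ.val.map (fun j₁ => (fwl K' l).2 j₁ j) := by
  rw [colorCode, colorCode, Prod.mk.injEq] at h
  exact ⟨sum_map_oneHot_injective (Nat.le_add_right _ _)
      (Multiset.forall_mem_map_iff.mpr fun i _ => fwl_fst_mem_vwColors hK l i j)
      (Multiset.forall_mem_map_iff.mpr fun i _ => fwl_fst_mem_vwColors hK' l i j) h.1,
    sum_map_oneHot_injective (Nat.le_add_left _ _)
      (Multiset.forall_mem_map_iff.mpr fun j₁ _ => fwl_snd_mem_wwColors hK l j₁ j)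
      (Multiset.forall_mem_map_iff.mpr fun j₁ _ => fwl_snd_mem_wwColors hK' l j₁ j) h.2⟩

end ColorSets

section OneHotLayers

variable {β γ : Type*} {S : Finset β} {T : Finset γ} {d : ℕ}

theorem exists_continuous_oneHot_prod (hS : S.card ≤ d) (hT : T.card ≤ d) (e : ℕ) :
    ∃ f : (Fin d → ℝ) × (Fin d → ℝ) → (Fin e → ℝ), Continuous f ∧
      ∀ x ∈ S ×ˢ T, f (oneHot S d x.1, oneHot T d x.2) = oneHot (S ×ˢ T) e x := by
  refine (S ×ˢ T).finite_toSet.exists_continuous_comp_eqOn (fun x hx y hy h => ?_) _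
  rw [Finset.mem_coe, Finset.mem_product] at hx hy
  rw [Prod.mk.injEq] at h
  exact Prod.ext (oneHot_injOn hS hx.1 hy.1 h.1) (oneHot_injOn hT hx.2 hy.2 h.2)

theorem exists_continuous_oneHot_update {e : ℕ} {S' : Finset (β × Multiset γ)}
    (hS : S.card ≤ d) (hT : T.card ≤ e) (hS' : ∀ c ∈ S', c.1 ∈ S ∧ ∀ x ∈ c.2, x ∈ T)
    (d' : ℕ) :
    ∃ p : (Fin d → ℝ) × (Fin e → ℝ) → (Fin d' → ℝ), Continuous p ∧
      ∀ c ∈ S', p (oneHot S d c.1, (c.2.map (oneHot T e)).sum) = oneHot S' d' c := by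
  refine S'.finite_toSet.exists_continuous_comp_eqOn (fun c hc c' hc' h => ?_) _
  obtain ⟨hc₁, hc₂⟩ := hS' c hc
  obtain ⟨hc'₁, hc'₂⟩ := hS' c' hc'
  rw [Prod.mk.injEq] at h
  exact Prod.ext (oneHot_injOn hS hc₁ hc'₁ h.1) (sum_map_oneHot_injective hT hc₂ hc'₂ h.2)

end OneHotLayers

namespace FGNN2

variable {m n : ℕ} {N : FGNN2 m n} {Ks : Finset (MILP m n)}

structure EncodesColors (N : FGNN2 m n) (Ks : Finset (MILP m n)) : Prop where
  p0_eq : ∀ c ∈ vwColors Ks 0, N.p0 c = oneHot (vwColors Ks 0) (N.d 0) c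
  q0_eq : ∀ c ∈ wwColors Ks 0, N.q0 c = oneHot (wwColors Ks 0) (N.d 0) c
  f_eq : ∀ l, ∀ x ∈ wwColors Ks l ×ˢ vwColors Ks l,
    N.f l (oneHot (wwColors Ks l) (N.d l) x.1, oneHot (vwColors Ks l) (N.d l) x.2)
      = oneHot (wwColors Ks l ×ˢ vwColors Ks l) (N.e l) x
  g_eq : ∀ l, ∀ x ∈ vwColors Ks l ×ˢ vwColors Ks l,
    N.g l (oneHot (vwColors Ks l) (N.d l) x.1, oneHot (vwColors Ks l) (N.d l) x.2)
      = oneHot (vwColors Ks l ×ˢ vwColors Ks l) (N.e l) x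
  p_eq : ∀ l, ∀ c ∈ vwColors Ks (l + 1),
    N.p l (oneHot (vwColors Ks l) (N.d l) c.1,
        (c.2.map (oneHot (wwColors Ks l ×ˢ vwColors Ks l) (N.e l))).sum)
      = oneHot (vwColors Ks (l + 1)) (N.d (l + 1)) c
  q_eq : ∀ l, ∀ c ∈ wwColors Ks (l + 1),
    N.q l (oneHot (wwColors Ks l) (N.d l) c.1,
        (c.2.map (oneHot (vwColors Ks l ×ˢ vwColors Ks l) (N.e l))).sum)
      = oneHot (wwColors Ks (l + 1)) (N.d (l + 1)) c

theorem EncodesColors.colorMap_eq (hN : N.EncodesColors Ks) (l : ℕ) :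
    (∀ c ∈ vwColors Ks l, (N.colorMap l).1 c = oneHot (vwColors Ks l) (N.d l) c) ∧
      ∀ c ∈ wwColors Ks l, (N.colorMap l).2 c = oneHot (wwColors Ks l) (N.d l) c := by
  induction l with
  | zero => exact ⟨hN.p0_eq, hN.q0_eq⟩
  | succ l ih =>
    obtain ⟨ihV, ihW⟩ := ih
    refine ⟨fun c hc => ?_, fun c hc => ?_⟩
    · obtain ⟨hc₁, hc₂⟩ := mem_vwColors_succ hc
      refine .trans ?_ (hN.p_eq l c hc)
      show N.p l ((N.colorMap l).1 c.1, _) = _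
      rw [ihV _ hc₁]
      congr 2
      refine congrArg Multiset.sum (Multiset.map_congr rfl fun x hx => ?_)
      obtain ⟨hx₁, hx₂⟩ := Finset.mem_product.mp (hc₂ x hx)
      rw [ihW _ hx₁, ihV _ hx₂, hN.f_eq l x (hc₂ x hx)]
    · obtain ⟨hc₁, hc₂⟩ := mem_wwColors_succ hc
      refine .trans ?_ (hN.q_eq l c hc)
      show N.q l ((N.colorMap l).2 c.1, _) = _
      rw [ihW _ hc₁]
      congr 2
      refine congrArg Multiset.sum (Multiset.map_congr rfl fun x hx => ?_)
      obtain ⟨hx₁, hx₂⟩ := Finset.mem_product.mp (hc₂ x hx)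
      rw [ihV _ hx₁, ihV _ hx₂, hN.g_eq l x (hc₂ x hx)]

theorem EncodesColors.eval_eq (hN : N.EncodesColors Ks) {K : MILP m n} (hK : K ∈ Ks) (j : Fin n) :
    N.eval K j = N.r
      (((Finset.univ.val.map fun i => (fwl K N.L).1 i j).map
          (oneHot (vwColors Ks N.L) (N.d N.L))).sum,
       ((Finset.univ.val.map fun j₁ => (fwl K N.L).2 j₁ j).map
          (oneHot (wwColors Ks N.L) (N.d N.L))).sum) := by
  rw [eval_eq_colorMap, Multiset.map_map, Multiset.map_map, Multiset.map_map, Multiset.map_map]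
  congr 2 <;> refine congrArg Multiset.sum (Multiset.map_congr rfl fun _ _ => ?_)
  · exact (hN.colorMap_eq N.L).1 _ (fwl_fst_mem_vwColors hK _ _ _)
  · exact (hN.colorMap_eq N.L).2 _ (fwl_snd_mem_wwColors hK _ _ _)

end FGNN2

theorem exists_FGNN2_eval_eq_colorCode {m n : ℕ} (Ks : Finset (MILP m n)) (L : ℕ)
    (r : (Fin (featDim Ks L) → ℝ) × (Fin (featDim Ks L) → ℝ) → ℝ) (hr : Continuous r) :
    ∃ N : FGNN2 m n, ∀ K ∈ Ks, ∀ j, N.eval K j = r (colorCode Ks L K j) := by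
  obtain ⟨p0, hp0_cont, hp0⟩ := Set.Finite.exists_continuous_eqOn (X := VFeat × WFeat × ℝ)
    (vwColors Ks 0).finite_toSet (oneHot (vwColors Ks 0) (featDim Ks 0))
  obtain ⟨q0, hq0_cont, hq0⟩ := Set.Finite.exists_continuous_eqOn (X := WFeat × WFeat × Bool)
    (wwColors Ks 0).finite_toSet (oneHot (wwColors Ks 0) (featDim Ks 0))
  choose f hf_cont hf using fun l =>
    exists_continuous_oneHot_prod (Nat.le_add_left (wwColors Ks l).card (vwColors Ks l).card)
      (Nat.le_add_right _ _) (msgDim Ks l)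
  choose g hg_cont hg using fun l =>
    exists_continuous_oneHot_prod (Nat.le_add_right (vwColors Ks l).card (wwColors Ks l).card)
      (Nat.le_add_right _ _) (msgDim Ks l)
  choose p hp_cont hp using fun l =>
    exists_continuous_oneHot_update (Nat.le_add_right (vwColors Ks l).card (wwColors Ks l).card)
      (Nat.le_add_right _ _) (fun _ => mem_vwColors_succ) (featDim Ks (l + 1))
  choose q hq_cont hq using fun l =>
    exists_continuous_oneHot_update (Nat.le_add_left (wwColors Ks l).card (vwColors Ks l).card)
      (Nat.le_add_left _ _) (fun _ => mem_wwColors_succ) (featDim Ks (l + 1))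
  let N : FGNN2 m n := ⟨L, featDim Ks, msgDim Ks, p0, q0, f, g, p, q, r,
    hp0_cont, hq0_cont, hf_cont, hg_cont, hp_cont, hq_cont, hr⟩
  have hN : N.EncodesColors Ks := ⟨hp0, hq0, hf, hg, hp, hq⟩
  exact ⟨N, fun K hK j => hN.eval_eq hK j⟩

/-- Two MILP instances satisfy `G ∼₂^W Ḡ` if and only if every 2-FGNN
outputs the same vector on both. -/
theorem fwlEquivW_iff_all_FGNN2_agree
    {m n : ℕ} (G H : MILP m n) :
    FWLEquivW G H ↔ ∀ F : FGNN2 m n, FGNN2.eval F G = FGNN2.eval F H := by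
  refine ⟨fun h F => FGNN2.eval_eq_of_fwlEquivW h F, fun h => ?_⟩
  by_contra hne
  obtain ⟨l, j, hlj⟩ : ∃ l j, ¬(_ ∧ _) := by simpa only [FWLEquivW, not_forall] using hne
  obtain ⟨N, hN⟩ := exists_FGNN2_eval_eq_colorCode {G, H} l
    (fun x => dist x (colorCode {G, H} l G j)) (continuous_id.dist continuous_const)
  have hcode : colorCode {G, H} l G j = colorCode {G, H} l H j := by
    have hj := congrFun (h N) j
    rw [hN G (by simp) j, hN H (by simp) j, dist_self] at hj
    exact (dist_eq_zero.mp hj.symm).symm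
  exact hlj (eq_of_colorCode_eq (by simp) (by simp) hcode)
end
end
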